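/- arXiv:math/0401375 — 2 statements merged into one kernel-verified Lean document; each statement's English description precedes it below -/
import Mathlib

section
/- Let α, β, i be positive integers and let α = C(m_i, i) + C(m_{i-1}, i-1) + ⋯ + C(m_j, j) be the i-binomial development of α. If β < C(m_j, j-1), then (α + β)^{<i>} = α^{<i>} + β^{<j-1>}. -/
open scoped BigOperators

/-- The largest `m` with `C(m, i) ≤ α` (for `i ≥ 1`, `α ≥ 1` this is the leading
exponent of the `i`-binomial development of `α`). -/
noncomputable def lead (α i : ℕ) : ℕ := sSup {m : ℕ | Nat.choose m i ≤ α}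

/-- `binUp i α = α^{<i>}`, defined through the `i`-binomial development of `α`:
if `α = C(m_i, i) + C(m_{i-1}, i-1) + ⋯ + C(m_j, j)` with
`m_i > m_{i-1} > ⋯ > m_j ≥ j ≥ 1`, then
`binUp i α = C(m_i+1, i+1) + C(m_{i-1}+1, i) + ⋯ + C(m_j+1, j+1)`, and `binUp i 0 = 0`. -/
noncomputable def binUp : ℕ → ℕ → ℕ
  | 0, _ => 0
  | (i+1), α =>
    if α = 0 then 0
    else Nat.choose (lead α (i+1) + 1) (i+2) +
      binUp i (α - Nat.choose (lead α (i+1)) (i+1))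

/-- `h : ℕ → ℕ` is a Macaulay function if `h 0 = 1` and `h (i+1) ≤ (h i)^{<i>}`
for every `i ≥ 1`. -/
def MacaulayFun (h : ℕ → ℕ) : Prop :=
  h 0 = 1 ∧ ∀ i, 1 ≤ i → h (i+1) ≤ binUp i (h i)

/-- `s₀(h) = inf {n | h n < C(a+n-1, n)} ∈ ℕ ∪ {∞}` for a Macaulay function of
type `a = h 1`. -/
noncomputable def s0M (h : ℕ → ℕ) : ℕ∞ :=
  sInf {x : ℕ∞ | ∃ n : ℕ, x = (n : ℕ∞) ∧ h n < Nat.choose (h 1 + n - 1) n}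

/-- `sup f = max {n | f n ≠ 0}` for a finitely supported `f : ℕ → ℕ`. -/
noncomputable def supN (f : ℕ → ℕ) : ℕ := sSup {n : ℕ | f n ≠ 0}

/-- A character: a finitely supported `γ : ℤ → ℤ` with `∑ γ(n) = 0`. -/
def IsChar (γ : ℤ → ℤ) : Prop :=
  (Function.support γ).Finite ∧ ∑ᶠ n, γ n = 0

/-- `s₀(γ) = inf {n ≥ 0 | γ n ≠ -1}`. -/
noncomputable def s0C (γ : ℤ → ℤ) : ℤ := sInf {n : ℤ | 0 ≤ n ∧ γ n ≠ -1}

/-- A positive character: `γ(n) = 0` for `n < 0`, `γ(0) = -1` and `γ(n) ≥ 0`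
for every `n ≥ s₀(γ)`. -/
def PosChar (γ : ℤ → ℤ) : Prop :=
  IsChar γ ∧ (∀ n < 0, γ n = 0) ∧ γ 0 = -1 ∧ ∀ n : ℤ, s0C γ ≤ n → 0 ≤ γ n

/-- `sup γ = max {n | γ n ≠ 0}` for a finitely supported `γ : ℤ → ℤ`. -/
noncomputable def supZ (γ : ℤ → ℤ) : ℤ := sSup {n : ℤ | γ n ≠ 0}

/-- `IsDev α i j m` says that `α = C(m_i, i) + C(m_{i-1}, i-1) + ⋯ + C(m_j, j)`
with `m_i > m_{i-1} > ⋯ > m_j ≥ j ≥ 1` is the `i`-binomial development of `α`. -/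
def IsDev (α i j : ℕ) (m : ℕ → ℕ) : Prop :=
  1 ≤ j ∧ j ≤ i ∧ j ≤ m j ∧ (∀ k, j ≤ k → k < i → m k < m (k+1)) ∧
    α = ∑ k ∈ Finset.Icc j i, Nat.choose (m k) k

/-! Since `α + C(m_j, j-1) ≤ C(m_i + 1, i)` (Pascal's rule, applied once per term of the
development), `α` and `α + β` share the leading term `C(m_i, i)`. Removing it lowers `i` by one
without changing `m_{i-1}, …, m_j`, until `i = j`, where what remains of `α + β` is exactly `β`. -/

lemma binUp_zero_right (i : ℕ) : binUp i 0 = 0 := by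
  cases i <;> simp [binUp]

lemma binUp_succ_of_ne_zero {α : ℕ} (i : ℕ) (hα : α ≠ 0) :
    binUp (i + 1) α =
      (lead α (i + 1) + 1).choose (i + 2) + binUp i (α - (lead α (i + 1)).choose (i + 1)) := by
  rw [binUp, if_neg hα]

lemma lead_eq_of_le_of_lt {α i n : ℕ} (h₁ : n.choose i ≤ α) (h₂ : α < (n + 1).choose i) :
    lead α i = n := by
  have hbdd : ∀ k ∈ {k : ℕ | k.choose i ≤ α}, k ≤ n := fun k hk =>
    not_lt.1 fun hnk => (Nat.choose_le_choose i hnk).not_gt (lt_of_le_of_lt hk h₂)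
  exact le_antisymm (csSup_le ⟨n, h₁⟩ hbdd) (le_csSup ⟨n, hbdd⟩ h₁)

namespace IsDev

variable {α i j : ℕ} {m : ℕ → ℕ}

lemma one_le_top (h : IsDev α i j m) : 1 ≤ i :=
  h.1.trans h.2.1

lemma choose_le_of_mem {k : ℕ} (h : IsDev α i j m) (hk : k ∈ Finset.Icc j i) :
    (m k).choose k ≤ α :=
  h.2.2.2.2 ▸ Finset.single_le_sum (f := fun k => (m k).choose k) (fun _ _ => Nat.zero_le _) hk

lemma choose_le (h : IsDev α i j m) : (m i).choose i ≤ α :=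
  h.choose_le_of_mem (Finset.mem_Icc.2 ⟨h.2.1, le_rfl⟩)

lemma eq_choose (h : IsDev α j j m) : α = (m j).choose j := by
  rw [h.2.2.2.2, Finset.Icc_self, Finset.sum_singleton]

lemma tail (h : IsDev α (i + 1) j m) (hji : j ≤ i) :
    IsDev (α - (m (i + 1)).choose (i + 1)) i j m := by
  obtain ⟨hj, -, hjm, hmono, hsum⟩ := h
  refine ⟨hj, hji, hjm, fun k hk hki => hmono k hk (by omega), ?_⟩
  rw [hsum, Finset.sum_Icc_succ_top (by omega), Nat.add_sub_cancel]

lemma add_choose_pred_le (h : IsDev α i j m) : α + (m j).choose (j - 1) ≤ (m i + 1).choose i := by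
  induction i generalizing α with
  | zero => exact absurd h.one_le_top (by norm_num)
  | succ i ih =>
    rcases h.2.1.eq_or_lt with rfl | hji
    · rw [h.eq_choose, Nat.add_sub_cancel, Nat.choose_succ_succ' (m (i + 1)), add_comm]
    · have hrest := ih (h.tail (by omega))
      have hmono : (m i + 1).choose i ≤ (m (i + 1)).choose i :=
        Nat.choose_le_choose i (h.2.2.2.1 i (by omega) (Nat.lt_succ_self i))
      have := h.choose_le
      rw [Nat.choose_succ_succ' (m (i + 1))]
      omega

lemma pos (h : IsDev α i j m) : 0 < α :=
  (Nat.choose_pos h.2.2.1).trans_le (h.choose_le_of_mem (Finset.mem_Icc.2 ⟨le_rfl, h.2.1⟩))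

lemma lead_add_eq {β : ℕ} (h : IsDev α i j m) (hβ : β < (m j).choose (j - 1)) :
    lead (α + β) i = m i :=
  lead_eq_of_le_of_lt (h.choose_le.trans (Nat.le_add_right _ _))
    (by have := h.add_choose_pred_le; omega)

lemma lead_eq (h : IsDev α i j m) : lead α i = m i := by
  simpa using h.lead_add_eq (β := 0) (Nat.choose_pos (by have := h.2.2.1; omega))

end IsDev

theorem binUp_add_general (α β i j : ℕ) (m : ℕ → ℕ)
    (hdev : IsDev α i j m) (hβlt : β < Nat.choose (m j) (j - 1)) :
    binUp i (α + β) = binUp i α + binUp (j - 1) β := by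
  induction i generalizing α with
  | zero => exact absurd hdev.one_le_top (by norm_num)
  | succ i ih =>
    have hα := hdev.pos
    rw [binUp_succ_of_ne_zero i (by omega), binUp_succ_of_ne_zero i hα.ne', hdev.lead_add_eq hβlt,
      hdev.lead_eq]
    rcases hdev.2.1.eq_or_lt with rfl | hji
    · rw [← hdev.eq_choose, Nat.add_sub_cancel_left, Nat.sub_self, binUp_zero_right,
        Nat.add_sub_cancel, add_zero]
    · have htop := hdev.choose_le
      rw [show α + β - (m (i + 1)).choose (i + 1) = α - (m (i + 1)).choose (i + 1) + β by omega,
        ih _ (hdev.tail (by omega))]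
      ring

/-- Lemma 2.15: if `α = C(m_i, i) + ⋯ + C(m_j, j)` is the
`i`-binomial development of `α` and `β < C(m_j, j-1)`, then
`(α + β)^{<i>} = α^{<i>} + β^{<j-1>}`. -/
theorem binUp_add (α β i j : ℕ) (m : ℕ → ℕ)
    (hα : 0 < α) (hβ : 0 < β) (hi : 0 < i)
    (hdev : IsDev α i j m) (hβlt : β < Nat.choose (m j) (j - 1)) :
    binUp i (α + β) = binUp i α + binUp (j - 1) β :=
  binUp_add_general α β i j m hdev hβlt
end

section
/- Let h : ℕ → ℕ be a finitely supported function, extended by 0 to negative integers, and let γ = -∂h, i.e. γ(n) = h(n-1) - h(n). Then h is a Macaulay function of type 2 if and only if γ is a positive character with s_0(γ) ≥ 2; in that case s_0(γ) = s_0(h). -/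
open scoped BigOperators

/-!
Since `h 1 = 2`, the bound `h (i + 1) ≤ (h i)^{<i>}` only ever meets two regimes: `α ≤ i`, where
`α^{<i>} = α`, and `α = i + 1 = C(i + 1, i)`, where `α^{<i>} = i + 2`. Hence a Macaulay function of
type 2 grows maximally, `h n = n + 1`, up to `s₀(h)` and is nonincreasing from there on. In terms of
`γ = -∂h` this says exactly that `γ = -1` on `[0, s₀)` and `γ ≥ 0` afterwards, i.e. that `γ` is a
positive character with `s₀(γ) = s₀(h)`; finiteness of the support of `h` makes `γ` a character.
-/

open Function

lemma lead_eq_of_choose_le_of_lt {α i m : ℕ} (hle : m.choose i ≤ α) (hlt : α < (m + 1).choose i) :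
    lead α i = m := by
  refine IsGreatest.csSup_eq ⟨hle, fun m' hm' => ?_⟩
  by_contra! hm
  exact absurd (hm'.trans_lt hlt) (Nat.choose_le_choose i hm).not_gt

lemma lead_eq_self {α i : ℕ} (hα : 0 < α) (hαi : α ≤ i) : lead α i = i :=
  lead_eq_of_choose_le_of_lt (by rwa [Nat.choose_self])
    (by rw [Nat.choose_succ_self_right]; omega)

lemma lead_succ_self {i : ℕ} (hi : 1 ≤ i) : lead (i + 1) i = i + 1 := by
  obtain ⟨k, rfl⟩ : ∃ k, i = k + 1 := ⟨i - 1, by omega⟩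
  refine lead_eq_of_choose_le_of_lt (Nat.choose_succ_self_right _).le ?_
  have hpos : 0 < (k + 2).choose k := Nat.choose_pos (by omega)
  rw [Nat.choose_succ_succ', Nat.choose_succ_self_right]
  omega

lemma binUp_of_le {i α : ℕ} (hα : α ≤ i) : binUp i α = α := by
  induction i generalizing α with
  | zero => simp [binUp, Nat.le_zero.mp hα]
  | succ i ih =>
    rcases Nat.eq_zero_or_pos α with rfl | hα0
    · simp [binUp]
    rw [binUp, if_neg hα0.ne', lead_eq_self hα0 hα, Nat.choose_self, Nat.choose_self,
      ih (by omega)]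
    omega

lemma binUp_succ_self {i : ℕ} (hi : 1 ≤ i) : binUp i (i + 1) = i + 2 := by
  obtain ⟨k, rfl⟩ : ∃ k, i = k + 1 := ⟨i - 1, by omega⟩
  rw [binUp, if_neg (by omega), lead_succ_self hi, Nat.choose_succ_self_right,
    Nat.choose_succ_self_right, Nat.sub_self, binUp_of_le (Nat.zero_le _)]

namespace MacaulayFun

variable {h : ℕ → ℕ}

lemma le_succ_self (hM : MacaulayFun h) (h1 : h 1 ≤ 2) (n : ℕ) : h n ≤ n + 1 := by
  induction n with
  | zero => exact hM.1.le
  | succ n ih =>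
    rcases Nat.eq_zero_or_pos n with rfl | hn
    · exact h1
    have hstep := hM.2 n hn
    rcases ih.lt_or_eq with hlt | hsucc
    · rw [binUp_of_le (by omega)] at hstep
      omega
    · rwa [hsucc, binUp_succ_self hn] at hstep

lemma succ_le_of_apply_le (hM : MacaulayFun h) {n : ℕ} (hn : 1 ≤ n) (hle : h n ≤ n) :
    h (n + 1) ≤ h n := by
  simpa only [binUp_of_le hle] using hM.2 n hn

end MacaulayFun

/-- The shape of a Macaulay function of type 2 with `s₀ = t`. -/
structure IsTypeTwoShape (h : ℕ → ℕ) (t : ℕ) : Prop where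
  eq_succ_of_lt : ∀ n < t, h n = n + 1
  apply_le : h t ≤ t
  succ_le_of_le : ∀ n, t ≤ n → h (n + 1) ≤ h n

namespace IsTypeTwoShape

variable {h : ℕ → ℕ} {t : ℕ}

lemma apply_le_of_le (hs : IsTypeTwoShape h t) {n : ℕ} (hn : t ≤ n) : h n ≤ n := by
  induction n, hn using Nat.le_induction with
  | base => exact hs.apply_le
  | succ n hn ih => exact (hs.succ_le_of_le n hn).trans (ih.trans n.le_succ)

lemma macaulayFun (hs : IsTypeTwoShape h t) (ht : 0 < t) : MacaulayFun h := by
  refine ⟨hs.eq_succ_of_lt 0 ht, fun i hi => ?_⟩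
  rcases lt_or_ge i t with hit | hti
  · rw [hs.eq_succ_of_lt i hit, binUp_succ_self hi]
    rcases (Nat.succ_le_of_lt hit).lt_or_eq with hlt | rfl
    · exact (hs.eq_succ_of_lt _ hlt).le
    · exact hs.apply_le.trans (by omega)
  · rw [binUp_of_le (hs.apply_le_of_le hti)]
    exact hs.succ_le_of_le i hti

lemma s0M_eq (hs : IsTypeTwoShape h t) (ht : 2 ≤ t) : s0M h = t := by
  have hchoose (n : ℕ) : (h 1 + n - 1).choose n = n + 1 := by
    rw [hs.eq_succ_of_lt 1 (by omega), show 1 + 1 + n - 1 = n + 1 by omega,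
      Nat.choose_succ_self_right]
  have hbelow (n : ℕ) : h n < n + 1 ↔ t ≤ n := by
    refine ⟨fun hn => ?_, fun hn => Nat.lt_succ_of_le (hs.apply_le_of_le hn)⟩
    by_contra! hnt
    rw [hs.eq_succ_of_lt n hnt] at hn
    exact hn.false
  refine le_antisymm (sInf_le ⟨t, rfl, by rw [hchoose, hbelow]⟩) (le_sInf ?_)
  rintro _ ⟨n, rfl, hn⟩
  rw [hchoose, hbelow] at hn
  exact_mod_cast hn

end IsTypeTwoShape

lemma MacaulayFun.exists_isTypeTwoShape {h : ℕ → ℕ} (hM : MacaulayFun h) (h1 : h 1 = 2)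
    (hfin : (support h).Finite) : ∃ t, 2 ≤ t ∧ IsTypeTwoShape h t := by
  have hex : ∃ n, h n ≤ n := by
    obtain ⟨n, hn⟩ := hfin.exists_notMem
    exact ⟨n, by simp [notMem_support.mp hn]⟩
  have hmin (n : ℕ) (hn : n < Nat.find hex) : h n = n + 1 :=
    le_antisymm (hM.le_succ_self h1.le n) (not_le.mp (Nat.find_min hex hn))
  have ht : 2 ≤ Nat.find hex := by
    by_contra! ht
    have := Nat.find_spec hex
    interval_cases Nat.find hex <;> simp_all [hM.1]
  have hle (n : ℕ) (hn : Nat.find hex ≤ n) : h n ≤ n := by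
    induction n, hn using Nat.le_induction with
    | base => exact Nat.find_spec hex
    | succ n hn ih => exact (hM.succ_le_of_apply_le (by omega) ih).trans (ih.trans n.le_succ)
  exact ⟨Nat.find hex, ht, hmin, Nat.find_spec hex,
    fun n hn => hM.succ_le_of_apply_le (by omega) (hle n hn)⟩

def zeroExtend (h : ℕ → ℕ) (n : ℤ) : ℤ := if n < 0 then 0 else h n.toNat

/-- The paper's `-∂f`. -/
def negDiff (f : ℤ → ℤ) (n : ℤ) : ℤ := f (n - 1) - f n

lemma isChar_negDiff {f : ℤ → ℤ} (hf : (support f).Finite) : IsChar (negDiff f) := by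
  have hshift : (support fun n => f (n - 1)).Finite :=
    (hf.image (· + 1)).subset fun n hn => ⟨n - 1, hn, by simp⟩
  refine ⟨(hshift.union hf).subset fun n hn => ?_, ?_⟩
  · by_contra hnot
    simp only [Set.mem_union, mem_support, not_or, not_not] at hnot
    simp [negDiff, hnot.1, hnot.2] at hn
  · change ∑ᶠ n, (f (n - 1) - f n) = 0
    rw [finsum_sub_distrib hshift hf, sub_eq_zero]
    exact finsum_comp_equiv (Equiv.subRight 1)

section zeroExtend

variable {h : ℕ → ℕ}

@[simp]
lemma zeroExtend_natCast (n : ℕ) : zeroExtend h n = h n := by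
  simp [zeroExtend]

lemma finite_support_zeroExtend (hfin : (support h).Finite) : (support (zeroExtend h)).Finite := by
  refine (hfin.image Nat.cast).subset fun n hn => ?_
  have hn0 : 0 ≤ n := by
    by_contra! hneg
    simp [zeroExtend, hneg] at hn
  lift n to ℕ using hn0
  exact ⟨n, by simpa using hn, rfl⟩

lemma negDiff_zeroExtend_of_neg {n : ℤ} (hn : n < 0) : negDiff (zeroExtend h) n = 0 := by
  simp [negDiff, zeroExtend, hn, show n - 1 < 0 by omega]

lemma negDiff_zeroExtend_zero : negDiff (zeroExtend h) 0 = -h 0 := by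
  simp [negDiff, zeroExtend]

lemma negDiff_zeroExtend_succ (n : ℕ) :
    negDiff (zeroExtend h) (n + 1) = h n - h (n + 1) := by
  simpa [negDiff] using zeroExtend_natCast (h := h) (n + 1)

end zeroExtend

lemma eq_neg_one_of_lt_s0C {γ : ℤ → ℤ} {n : ℤ} (hn : 0 ≤ n) (hlt : n < s0C γ) : γ n = -1 := by
  by_contra hne
  exact hlt.not_ge (csInf_le ⟨0, fun _ hm => hm.1⟩ ⟨hn, hne⟩)

lemma s0C_eq {γ : ℤ → ℤ} {t : ℤ} (ht : 0 ≤ t) (hlt : ∀ n, 0 ≤ n → n < t → γ n = -1)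
    (hne : γ t ≠ -1) : s0C γ = t :=
  IsLeast.csInf_eq ⟨⟨ht, hne⟩, fun n ⟨hn, hn'⟩ => by
    by_contra! hnt
    exact hn' (hlt n hn hnt)⟩

lemma PosChar.s0C_pos {γ : ℤ → ℤ} (hγ : PosChar γ) : 0 < s0C γ := by
  obtain ⟨-, -, hγ0, hγnonneg⟩ := hγ
  by_contra! hs
  have := hγnonneg 0 hs
  omega

namespace IsTypeTwoShape

variable {h : ℕ → ℕ} {t : ℕ}

lemma negDiff_eq_neg_one (hs : IsTypeTwoShape h t) {n : ℤ} (hn : 0 ≤ n) (hnt : n < t) :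
    negDiff (zeroExtend h) n = -1 := by
  lift n to ℕ using hn
  cases n with
  | zero => simp [negDiff_zeroExtend_zero, hs.eq_succ_of_lt 0 (by omega)]
  | succ n =>
    rw [Nat.cast_succ, negDiff_zeroExtend_succ, hs.eq_succ_of_lt n (by omega),
      hs.eq_succ_of_lt (n + 1) (by omega)]
    push_cast
    ring

lemma negDiff_nonneg (hs : IsTypeTwoShape h t) {n : ℤ} (htn : t ≤ n) :
    0 ≤ negDiff (zeroExtend h) n := by
  lift n to ℕ using (Nat.cast_nonneg t).trans htn
  cases n with
  | zero =>
    have : h 0 = 0 := by simpa [show t = 0 by omega] using hs.apply_le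
    simp [negDiff_zeroExtend_zero, this]
  | succ n =>
    rw [Nat.cast_succ, negDiff_zeroExtend_succ, sub_nonneg, Nat.cast_le]
    rcases lt_or_ge n t with hnt | htn'
    · rw [hs.eq_succ_of_lt n hnt, show n + 1 = t by omega]
      exact hs.apply_le
    · exact hs.succ_le_of_le n htn'

lemma s0C_negDiff (hs : IsTypeTwoShape h t) : s0C (negDiff (zeroExtend h)) = t :=
  s0C_eq (Nat.cast_nonneg t) (fun _ hn hnt => hs.negDiff_eq_neg_one hn hnt)
    (by have := hs.negDiff_nonneg le_rfl; omega)

lemma posChar_negDiff (hs : IsTypeTwoShape h t) (hfin : (support h).Finite) (ht : 0 < t) :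
    PosChar (negDiff (zeroExtend h)) :=
  ⟨isChar_negDiff (finite_support_zeroExtend hfin), fun _ => negDiff_zeroExtend_of_neg,
    hs.negDiff_eq_neg_one le_rfl (by exact_mod_cast ht),
    fun _ hn => hs.negDiff_nonneg (by rwa [hs.s0C_negDiff] at hn)⟩

end IsTypeTwoShape

lemma isTypeTwoShape_of_posChar {h : ℕ → ℕ} (hγ : PosChar (negDiff (zeroExtend h))) :
    IsTypeTwoShape h (s0C (negDiff (zeroExtend h))).toNat := by
  set s := s0C (negDiff (zeroExtend h))
  have hs : 0 < s := hγ.s0C_pos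
  obtain ⟨-, -, hγ0, hγnonneg⟩ := hγ
  have hstep {n : ℕ} (hn : s ≤ n) : h n ≤ h (n - 1) := by
    have := hγnonneg n hn
    obtain ⟨m, rfl⟩ : ∃ m, n = m + 1 := ⟨n - 1, by omega⟩
    rw [Nat.cast_succ, negDiff_zeroExtend_succ] at this
    simpa using this
  have hmax (n : ℕ) (hn : n < s.toNat) : h n = n + 1 := by
    induction n with
    | zero => simpa [negDiff_zeroExtend_zero] using hγ0
    | succ n ih =>
      have := eq_neg_one_of_lt_s0C (γ := negDiff (zeroExtend h)) (n := n + 1) (by omega)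
        (by omega)
      rw [negDiff_zeroExtend_succ, ih (by omega)] at this
      push_cast at this
      omega
  refine ⟨hmax, ?_, fun n hn => by simpa using hstep (n := n + 1) (by omega)⟩
  have := hstep (n := s.toNat) (by omega)
  rwa [hmax (s.toNat - 1) (by omega), Nat.sub_add_cancel (by omega)] at this

/-- Remark 2.18: for `h : ℕ → ℕ` finitely supported,
extended by zero to `ℤ`, and `γ = -∂h`, the function `h` is a Macaulay
function of type 2 iff `γ` is a positive character with `s₀(γ) ≥ 2`; in that
case `s₀(γ) = s₀(h)`. -/
theorem macaulay_type_two_iff_posChar (h : ℕ → ℕ)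
    (hfin : (Function.support h).Finite)
    (hz : ℤ → ℤ) (hhz : ∀ n : ℤ, hz n = if n < 0 then 0 else (h n.toNat : ℤ))
    (γ : ℤ → ℤ) (hγ : ∀ n : ℤ, γ n = hz (n - 1) - hz n) :
    ((MacaulayFun h ∧ h 1 = 2) ↔ (PosChar γ ∧ 2 ≤ s0C γ)) ∧
    ((MacaulayFun h ∧ h 1 = 2) → s0M h = ((s0C γ).toNat : ℕ∞)) := by
  obtain rfl : hz = zeroExtend h := funext hhz
  obtain rfl : γ = negDiff (zeroExtend h) := funext hγ
  refine ⟨⟨fun ⟨hM, h1⟩ => ?_, fun ⟨hpos, hs⟩ => ?_⟩, fun ⟨hM, h1⟩ => ?_⟩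
  · obtain ⟨t, ht, hshape⟩ := hM.exists_isTypeTwoShape h1 hfin
    rw [hshape.s0C_negDiff]
    exact ⟨hshape.posChar_negDiff hfin (by omega), by exact_mod_cast ht⟩
  · have hshape := isTypeTwoShape_of_posChar hpos
    exact ⟨hshape.macaulayFun (by omega), hshape.eq_succ_of_lt 1 (by omega)⟩
  · obtain ⟨t, ht, hshape⟩ := hM.exists_isTypeTwoShape h1 hfin
    rw [hshape.s0M_eq ht, hshape.s0C_negDiff, Int.toNat_natCast]
end
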